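/- Let k ∈ ℕ, let M ∈ 𝔽₂^{k×k} be skew-symmetric, and let w ∈ 𝔽₂^k. Define u_{M,w} ∈ ℝ^{𝔽₂^k} by u_{M,w}(x) := 2^{−k/2}·(−1)^{Q_M(x)+wᵀx}, and define the operator P_{M,w} := 2^{−k}·∑_{p∈𝔽₂^k} (−1)^{Q_M(p)+wᵀp}·X_p Z_{Mp} on ℝ^{𝔽₂^k}. Then P_{M,w} equals the rank-one orthogonal projection u_{M,w} u_{M,w}ᵀ onto the span of u_{M,w}; in particular P_{M,w}² = P_{M,w}, P_{M,w} is self-adjoint, and its trace equals 1. -/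

import Mathlib

open Matrix

/-- The quadratic form `Q_M(x) = xᵀ M̃ x` where `M̃` is the strictly upper-triangular
part of `M`. -/
def Qform (k : ℕ) (M : Matrix (Fin k) (Fin k) (ZMod 2)) (x : Fin k → ZMod 2) : ZMod 2 :=
  x ⬝ᵥ (Matrix.of fun i j : Fin k => if (i : ℕ) < (j : ℕ) then M i j else 0).mulVec x

/-- The translation operator `(X_p f)(x) = f(x + p)` on `ℝ^{𝔽₂^k}`. -/
def Xop (k : ℕ) (p : Fin k → ZMod 2) (f : (Fin k → ZMod 2) → ℝ) :
    (Fin k → ZMod 2) → ℝ :=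
  fun x => f (x + p)

/-- The modulation operator `(Z_q f)(x) = (−1)^{qᵀx}·f(x)` on `ℝ^{𝔽₂^k}`. -/
def Zop (k : ℕ) (q : Fin k → ZMod 2) (f : (Fin k → ZMod 2) → ℝ) :
    (Fin k → ZMod 2) → ℝ :=
  fun x => (-1 : ℝ) ^ (q ⬝ᵥ x).val * f x

/-- The vector `u_{M,w} ∈ ℝ^{𝔽₂^k}` with `u_{M,w}(x) = 2^{−k/2}·(−1)^{Q_M(x)+wᵀx}`. -/
noncomputable def kerdockVec (k : ℕ) (M : Matrix (Fin k) (Fin k) (ZMod 2))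
    (w : Fin k → ZMod 2) (x : Fin k → ZMod 2) : ℝ :=
  ((Real.sqrt 2)⁻¹) ^ k * (-1 : ℝ) ^ (Qform k M x + w ⬝ᵥ x).val

/-- The operator `P_{M,w} = 2^{−k}·∑_p (−1)^{Q_M(p)+wᵀp}·X_p Z_{Mp}` on `ℝ^{𝔽₂^k}`. -/
noncomputable def Pop (k : ℕ) (M : Matrix (Fin k) (Fin k) (ZMod 2))
    (w : Fin k → ZMod 2) (f : (Fin k → ZMod 2) → ℝ) : (Fin k → ZMod 2) → ℝ :=
  fun x => ((2 : ℝ) ^ k)⁻¹ *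
    ∑ p : Fin k → ZMod 2,
      (-1 : ℝ) ^ (Qform k M p + w ⬝ᵥ p).val * Xop k p (Zop k (M.mulVec p) f) x

/-!
Write `φ(x) = Q_M(x) + wᵀx`. Since `M` is alternating, `M = M̃ + M̃ᵀ`, so `Q_M` polarizes as
`Q_M(x + p) = Q_M(x) + Q_M(p) + xᵀMp`, and `pᵀMp = 0`. Hence the sign carried by the term `p` of
`(P_{M,w} f)(x)` is `(−1)^{φ(p) + (Mp)ᵀ(x+p)} = (−1)^{φ(x) + φ(x+p)}`, and substituting `y = x + p`
gives `(P_{M,w} f)(x) = 2^{−k} (−1)^{φ(x)} ∑_y (−1)^{φ(y)} f(y) = ⟨u, f⟩ u(x)` with `u = u_{M,w}`.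
As `⟨u, u⟩ = 1`, the remaining claims are those of the rank-one projection `f ↦ ⟨u, f⟩ u`.
-/

lemma neg_one_pow_val_add {R : Type*} [Ring R] (a b : ZMod 2) :
    (-1 : R) ^ (a + b).val = (-1) ^ a.val * (-1) ^ b.val := by
  rw [ZMod.val_add, ← neg_one_pow_eq_pow_mod_two, pow_add]

lemma add_dotProduct_mulVec_add {ι R : Type*} [Fintype ι] [CommSemiring R] (A : Matrix ι ι R)
    (x y : ι → R) :
    (x + y) ⬝ᵥ A *ᵥ (x + y) = x ⬝ᵥ A *ᵥ x + y ⬝ᵥ A *ᵥ y + x ⬝ᵥ (A + Aᵀ) *ᵥ y := by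
  have hswap : y ⬝ᵥ A *ᵥ x = x ⬝ᵥ Aᵀ *ᵥ y := by
    rw [dotProduct_mulVec, ← mulVec_transpose, dotProduct_comm]
  simp only [mulVec_add, dotProduct_add, add_dotProduct, add_mulVec, hswap]
  ring

def strictUpper {k : ℕ} {R : Type*} [Zero R] (M : Matrix (Fin k) (Fin k) R) :
    Matrix (Fin k) (Fin k) R :=
  Matrix.of fun i j => if (i : ℕ) < (j : ℕ) then M i j else 0

lemma Qform_eq_dotProduct_strictUpper (k : ℕ) (M : Matrix (Fin k) (Fin k) (ZMod 2))
    (x : Fin k → ZMod 2) : Qform k M x = x ⬝ᵥ strictUpper M *ᵥ x := rfl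

lemma strictUpper_add_transpose {k : ℕ} {R : Type*} [AddZeroClass R]
    {M : Matrix (Fin k) (Fin k) R} (hdiag : ∀ i, M i i = 0) (hsym : ∀ i j, M i j = M j i) :
    strictUpper M + (strictUpper M)ᵀ = M := by
  ext i j
  rcases lt_trichotomy i j with h | rfl | h
  · simp [strictUpper, h, h.not_gt]
  · simp [strictUpper, hdiag]
  · simp [strictUpper, h, h.not_gt, hsym i j]

lemma inv_sqrt_two_pow_mul_self (k : ℕ) : (√2)⁻¹ ^ k * (√2)⁻¹ ^ k = ((2 : ℝ) ^ k)⁻¹ := by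
  rw [← mul_pow, ← mul_inv, Real.mul_self_sqrt zero_le_two, inv_pow]

lemma kerdockVec_dotProduct_self (k : ℕ) (M : Matrix (Fin k) (Fin k) (ZMod 2))
    (w : Fin k → ZMod 2) : kerdockVec k M w ⬝ᵥ kerdockVec k M w = 1 := by
  have hterm (y : Fin k → ZMod 2) :
      kerdockVec k M w y * kerdockVec k M w y = ((2 : ℝ) ^ k)⁻¹ := by
    rw [kerdockVec, mul_mul_mul_comm, inv_sqrt_two_pow_mul_self, ← pow_add, ← two_mul,
      pow_mul, neg_one_sq, one_pow, mul_one]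
  simp only [dotProduct, hterm, Finset.sum_const, Finset.card_univ, Fintype.card_fun,
    ZMod.card, Fintype.card_fin, nsmul_eq_mul]
  push_cast
  exact mul_inv_cancel₀ (by positivity)

section Alternating

variable {k : ℕ} {M : Matrix (Fin k) (Fin k) (ZMod 2)}

lemma Qform_add (hdiag : ∀ i, M i i = 0) (hsym : ∀ i j, M i j = M j i) (x y : Fin k → ZMod 2) :
    Qform k M (x + y) = Qform k M x + Qform k M y + x ⬝ᵥ M *ᵥ y := by
  simp only [Qform_eq_dotProduct_strictUpper, add_dotProduct_mulVec_add,
    strictUpper_add_transpose hdiag hsym]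

lemma dotProduct_mulVec_self_eq_zero (hdiag : ∀ i, M i i = 0) (hsym : ∀ i j, M i j = M j i)
    (x : Fin k → ZMod 2) : x ⬝ᵥ M *ᵥ x = 0 := by
  have h := Qform_add hdiag hsym x x
  have hxx : x + x = 0 := funext fun i => CharTwo.add_self_eq_zero (x i)
  rwa [hxx, CharTwo.add_self_eq_zero, zero_add, eq_comm,
    Qform_eq_dotProduct_strictUpper, zero_dotProduct] at h

lemma phase_add_dotProduct_mulVec (hdiag : ∀ i, M i i = 0) (hsym : ∀ i j, M i j = M j i)
    (w x p : Fin k → ZMod 2) :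
    Qform k M p + w ⬝ᵥ p + (M *ᵥ p) ⬝ᵥ (x + p)
      = (Qform k M x + w ⬝ᵥ x) + (Qform k M (x + p) + w ⬝ᵥ (x + p)) := by
  rw [Qform_add hdiag hsym, dotProduct_add, dotProduct_add, dotProduct_comm (M *ᵥ p) x,
    dotProduct_comm (M *ᵥ p) p, dotProduct_mulVec_self_eq_zero hdiag hsym]
  linear_combination -CharTwo.add_self_eq_zero (Qform k M x + w ⬝ᵥ x)

lemma Pop_apply (hdiag : ∀ i, M i i = 0) (hsym : ∀ i j, M i j = M j i)
    (w : Fin k → ZMod 2) (f : (Fin k → ZMod 2) → ℝ) (x : Fin k → ZMod 2) :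
    Pop k M w f x = ((2 : ℝ) ^ k)⁻¹ * ((-1) ^ (Qform k M x + w ⬝ᵥ x).val *
      ∑ y, (-1) ^ (Qform k M y + w ⬝ᵥ y).val * f y) := by
  have hterm (p : Fin k → ZMod 2) :
      (-1 : ℝ) ^ (Qform k M p + w ⬝ᵥ p).val * Xop k p (Zop k (M *ᵥ p) f) x
        = (-1) ^ (Qform k M x + w ⬝ᵥ x).val *
          ((-1) ^ (Qform k M (x + p) + w ⬝ᵥ (x + p)).val * f (x + p)) := by
    rw [Xop, Zop, ← mul_assoc, ← mul_assoc, ← neg_one_pow_val_add, ← neg_one_pow_val_add,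
      phase_add_dotProduct_mulVec hdiag hsym]
  rw [Pop, Finset.sum_congr rfl fun p _ => hterm p, ← Finset.mul_sum]
  congr 2
  exact Equiv.sum_comp (Equiv.addLeft x) fun y => (-1 : ℝ) ^ (Qform k M y + w ⬝ᵥ y).val * f y

lemma Pop_eq_dotProduct_smul_kerdockVec (hdiag : ∀ i, M i i = 0) (hsym : ∀ i j, M i j = M j i)
    (w : Fin k → ZMod 2) (f : (Fin k → ZMod 2) → ℝ) :
    Pop k M w f = (kerdockVec k M w ⬝ᵥ f) • kerdockVec k M w := by
  ext x
  simp only [Pop_apply hdiag hsym, Pi.smul_apply, smul_eq_mul, dotProduct, kerdockVec,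
    mul_assoc, ← Finset.mul_sum, ← inv_sqrt_two_pow_mul_self]
  ring

end Alternating

/-- For skew-symmetric `M ∈ 𝔽₂^{k×k}` and `w ∈ 𝔽₂^k`, the operator
`P_{M,w}` equals the rank-one orthogonal projection `u_{M,w} u_{M,w}ᵀ`
(i.e. `f ↦ ⟨u_{M,w}, f⟩·u_{M,w}`); in particular `P_{M,w}² = P_{M,w}`, `P_{M,w}` is
self-adjoint, and its trace equals `1`. -/
theorem stmt_14 (k : ℕ) (M : Matrix (Fin k) (Fin k) (ZMod 2))
    (hdiag : ∀ i, M i i = 0) (hsym : ∀ i j, M i j = M j i)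
    (w : Fin k → ZMod 2) :
    (∀ f : (Fin k → ZMod 2) → ℝ,
      Pop k M w f = fun x =>
        (∑ y : Fin k → ZMod 2, kerdockVec k M w y * f y) * kerdockVec k M w x) ∧
    (∀ f : (Fin k → ZMod 2) → ℝ, Pop k M w (Pop k M w f) = Pop k M w f) ∧
    (∀ f g : (Fin k → ZMod 2) → ℝ,
      ∑ x : Fin k → ZMod 2, Pop k M w f x * g x
        = ∑ x : Fin k → ZMod 2, f x * Pop k M w g x) ∧
    (∑ x : Fin k → ZMod 2,
        Pop k M w (fun y => if y = x then (1 : ℝ) else 0) x = 1) := by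
  have hP := Pop_eq_dotProduct_smul_kerdockVec hdiag hsym w
  have hu := kerdockVec_dotProduct_self k M w
  refine ⟨hP, fun f => ?_, fun f g => ?_, ?_⟩
  · rw [hP, hP, dotProduct_smul, hu, smul_eq_mul, mul_one]
  · change Pop k M w f ⬝ᵥ g = f ⬝ᵥ Pop k M w g
    rw [hP, hP, smul_dotProduct, dotProduct_smul, dotProduct_comm f, smul_eq_mul, smul_eq_mul,
      mul_comm]
  · simp only [hP, Pi.smul_apply, smul_eq_mul, dotProduct, mul_ite, mul_one, mul_zero,
      Finset.sum_ite_eq', Finset.mem_univ, if_true]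
    exact hu
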